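/- Let $m, d \ge 1$ and let $P_d$ be the degree $D = 2^{d+1}-1$ polynomial over non-commuting variables $x_0,\ldots,x_{m-1}$ defined as the sum, over all legal $\mathbb{Z}_m$-colorings $\gamma$ of the complete binary tree $T_d$, of the word $x_{\gamma(v_1)}\cdots x_{\gamma(v_D)}$ (vertices in in-order). For the specific $k$ with binary expansion $1010\cdots$, the partial derivative matrix $M_k(P_d)$ (rows indexed by $[m]^k$, columns by $[m]^{D-k}$, entries the coefficients of the corresponding concatenated words) contains an $r \times r$ identity submatrix with $r \ge m^{d/32}$, and hence has rank at least $m^{d/32}$. -/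

import Mathlib

/-- Vertices of the complete binary tree `T_d` of depth `d`, heap-indexed:
`x ∈ [1, 2^{d+1})`; children of an internal vertex `x < 2^d` are `2x` and `2x+1`. -/
def Vtx (d : ℕ) : Type := {x : ℕ // 1 ≤ x ∧ x < 2 ^ (d + 1)}

/-- A coloring is legal if each internal node's color is the mod-`m` sum of its
children's colors. -/
def isLegal {d m : ℕ} (γ : Vtx d → ZMod m) : Prop :=
  ∀ (x : ℕ) (h1 : 1 ≤ x) (h2 : x < 2 ^ d),
    γ ⟨x, h1, by have h := Nat.pow_succ 2 d; omega⟩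
      = γ ⟨2 * x, by have h := Nat.pow_succ 2 d; omega⟩
      + γ ⟨2 * x + 1, by have h := Nat.pow_succ 2 d; omega⟩

/-- The root of `T_d` (heap index `1`). -/
def rootVtx (d : ℕ) : Vtx d :=
  ⟨1, le_refl 1, Nat.one_lt_pow (Nat.succ_ne_zero d) (by norm_num)⟩

/-- The 1-indexed in-order position of the heap vertex `x` (at level `ℓ = ⌊log₂ x⌋`)
in the complete binary tree of depth `d`:
`(x - 2^ℓ) · 2^{d-ℓ+1} + 2^{d-ℓ}`. -/
def inorderPos (d x : ℕ) : ℕ :=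
  (x - 2 ^ Nat.log2 x) * 2 ^ (d - Nat.log2 x + 1) + 2 ^ (d - Nat.log2 x)

/-- The word `u` (of length `D = 2^{d+1} - 1`) lists the colors `γ(v_1)⋯γ(v_D)` of the
vertices of `T_d` in in-order. -/
def consistent {d m : ℕ} (γ : Vtx d → ZMod m)
    (u : Fin (2 ^ (d + 1) - 1) → ZMod m) : Prop :=
  ∀ x : Vtx d, ∀ h : inorderPos d x.val - 1 < 2 ^ (d + 1) - 1,
    u ⟨inorderPos d x.val - 1, h⟩ = γ x

/-- The polynomial `P_d = ∑_{γ legal} x_{γ(v_1)}⋯x_{γ(v_D)}`, represented by its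
coefficient function on words of length `D = 2^{d+1}-1` over the variables
`x_0, …, x_{m-1}` (indexed by `ℤ_m`): the coefficient of a word `u` is the number of
legal colorings whose in-order word is `u`. -/
noncomputable def Pfull (F : Type*) [Field F] (m d : ℕ) :
    (Fin (2 ^ (d + 1) - 1) → ZMod m) → F :=
  fun u => (Nat.card {γ : Vtx d → ZMod m // isLegal γ ∧ consistent γ u} : F)

/-- The polynomial `P_{d,α}`: the sum restricted to legal colorings with root color `α`. -/
noncomputable def Proot (F : Type*) [Field F] (m d : ℕ) (α : ZMod m) :
    (Fin (2 ^ (d + 1) - 1) → ZMod m) → F :=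
  fun u =>
    (Nat.card {γ : Vtx d → ZMod m // isLegal γ ∧ γ (rootVtx d) = α ∧ consistent γ u} : F)

/-- Concatenation product of non-commutative homogeneous polynomials (coefficient
functions on words). -/
def ncMul {F : Type*} [Field F] {m L₁ L₂ : ℕ}
    (f : (Fin L₁ → ZMod m) → F) (g : (Fin L₂ → ZMod m) → F) :
    (Fin (L₁ + L₂) → ZMod m) → F :=
  fun u => f (fun i => u (Fin.castAdd L₂ i)) * g (fun j => u (Fin.natAdd L₁ j))

/-- The single variable `x_c` as a degree-1 non-commutative polynomial. -/
def ncVar (F : Type*) [Field F] {m : ℕ} (c : ZMod m) : (Fin 1 → ZMod m) → F :=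
  fun u => if u 0 = c then 1 else 0

/-- Transport along an equality of degrees. -/
def castPoly {F : Type*} {m L L' : ℕ} (h : L = L')
    (f : (Fin L → ZMod m) → F) : (Fin L' → ZMod m) → F :=
  fun u => f (fun i => u (Fin.cast h i))

/-- The number `k` whose binary expansion is `1010⋯` (alternating, length `d+1`,
starting with `1` at the most significant bit `2^d`). -/
def altNum (d : ℕ) : ℕ :=
  ∑ j ∈ Finset.range (d + 1), if (d - j) % 2 = 0 then 2 ^ j else 0

/-- The partial derivative matrix `M_k(P_d)` for `k = altNum d` and `l = D - k`:
rows indexed by words in `[m]^k`, columns by words in `[m]^{D-k}`, entries the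
coefficients of the concatenated words in `P_d`. -/
noncomputable def MkPd (F : Type*) [Field F] (m d l : ℕ)
    (hl : 2 ^ (d + 1) - 1 = altNum d + l) :
    Matrix (Fin (altNum d) → ZMod m) (Fin l → ZMod m) F :=
  Matrix.of fun w w' => castPoly hl (Pfull F m d) (Fin.append w w')

namespace PdAux

def pth : ℕ → ℕ
  | 0 => 1
  | (j+1) => 2 * pth j + (if j % 2 = 0 then 1 else 0)

lemma pth_ge (j : ℕ) : 2 ^ j ≤ pth j := by
  induction j with
  | zero => simp [pth]
  | succ j ih => rw [pth, pow_succ]; split <;> omega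

lemma pth_lt (j : ℕ) : pth j < 2 ^ (j+1) := by
  induction j with
  | zero => simp [pth]
  | succ j ih =>
    have e : (2:ℕ) ^ (j+2) = 2 * 2 ^ (j+1) := by ring
    rw [pth]
    split <;> omega

lemma pth_pos (j : ℕ) : 1 ≤ pth j :=
  le_trans (Nat.one_le_two_pow) (pth_ge j)

lemma three_pth (j : ℕ) : 3 * pth j + 2 = 5 * 2 ^ j + j % 2 := by
  induction j with
  | zero => simp [pth]
  | succ j ih => rw [pth, pow_succ]; split <;> omega

lemma altNum_succ (d : ℕ) :
    altNum (d+1) = 2 * altNum d + (if (d+1) % 2 = 0 then 1 else 0) := by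
  unfold altNum
  rw [Finset.sum_range_succ']
  have h1 : ∀ j ∈ Finset.range (d+1),
      (if (d + 1 - (j+1)) % 2 = 0 then 2 ^ (j+1) else 0)
        = 2 * (if (d - j) % 2 = 0 then 2 ^ j else 0) := by
    intro j hj
    have : d + 1 - (j+1) = d - j := by omega
    rw [this]
    split <;> simp [pow_succ] <;> ring
  rw [Finset.sum_congr rfl h1, ← Finset.mul_sum]
  have : d + 1 - 0 = d + 1 := rfl
  simp [this]

lemma three_altNum (d : ℕ) : 3 * altNum d + 1 + d % 2 = 2 ^ (d+2) := by
  induction d with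
  | zero => norm_num [altNum]
  | succ d ih =>
    have e : (2:ℕ) ^ (d+1+2) = 2 * 2 ^ (d+2) := by ring
    rw [altNum_succ]
    split <;> omega



inductive NS : Type where
  | zero | pE (i : ℕ) | pO (i : ℕ) | aS (i : ℕ) | bS (i : ℕ)
deriving DecidableEq

def step : NS → ℕ → NS
  | .pE i, r => if r = 0 then .aS i else .pO i
  | .pO i, r => if r = 0 then .pE (i+1) else .bS i
  | .aS i, r => if r = 0 then .aS i else .zero
  | .bS i, r => if r = 0 then .bS i else .zero
  | .zero, _ => .zero

def state : ℕ → NS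
  | 0 => .zero
  | 1 => .pE 0
  | (n+2) => step (state ((n+2)/2)) ((n+2) % 2)
decreasing_by omega

lemma state_double (x : ℕ) (hx : 1 ≤ x) : state (2*x) = step (state x) 0 := by
  obtain ⟨n, rfl⟩ : ∃ n, x = n+1 := ⟨x-1, by omega⟩
  have h : 2*(n+1) = (2*n)+2 := by ring
  rw [h, state]
  have h1 : (2*n+2)/2 = n+1 := by omega
  have h2 : (2*n+2)%2 = 0 := by omega
  rw [h1, h2]

lemma state_double' (x : ℕ) (hx : 1 ≤ x) : state (2*x+1) = step (state x) 1 := by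
  obtain ⟨n, rfl⟩ : ∃ n, x = n+1 := ⟨x-1, by omega⟩
  have h : 2*(n+1)+1 = (2*n+1)+2 := by ring
  rw [h, state]
  have h1 : (2*n+1+2)/2 = n+1 := by omega
  have h2 : (2*n+1+2)%2 = 1 := by omega
  rw [h1, h2]


lemma state_one : state 1 = NS.pE 0 := by rw [state]

lemma state_pth (j : ℕ) :
    state (pth j) = if j % 2 = 0 then NS.pE (j/2) else NS.pO (j/2) := by
  induction j with
  | zero => simpa [pth] using state_one
  | succ j ih =>
    by_cases h : j % 2 = 0
    · have h1 : (j+1) % 2 = 1 := by omega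
      have h2 : (j+1) / 2 = j / 2 := by omega
      rw [pth, if_pos h, state_double' _ (pth_pos j), ih, if_pos h, h1, h2]
      simp [step]
    · have h1 : (j+1) % 2 = 0 := by omega
      have h2 : (j+1) / 2 = j / 2 + 1 := by omega
      have h3 : 2 * pth j + (if j % 2 = 0 then 1 else 0) = 2 * pth j := by
        simp [h]
      rw [pth, h3, state_double _ (pth_pos j), ih, if_neg h, h1, h2]
      simp [step]

lemma pth_double (i : ℕ) : pth (2*i+1) = 2 * pth (2*i) + 1 := by
  have h : (2*i) % 2 = 0 := by omega
  rw [show 2*i+1 = (2*i)+1 from rfl, pth, if_pos h]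

lemma pth_double' (i : ℕ) : pth (2*i+2) = 2 * pth (2*i+1) := by
  have h : ¬ (2*i+1) % 2 = 0 := by omega
  rw [show 2*i+2 = (2*i+1)+1 from rfl, pth, if_neg h]
  omega

lemma step0_pE {S : NS} {i : ℕ} (h : step S 0 = NS.pE i) :
    ∃ i', i = i' + 1 ∧ S = NS.pO i' := by
  cases S <;> simp [step] at h
  case pO i' => exact ⟨i', h.symm, rfl⟩

lemma step1_pE {S : NS} {i : ℕ} (h : step S 1 = NS.pE i) : False := by
  cases S <;> simp [step] at h

lemma step0_pO {S : NS} {i : ℕ} (h : step S 0 = NS.pO i) : False := by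
  cases S <;> simp [step] at h

lemma step1_pO {S : NS} {i : ℕ} (h : step S 1 = NS.pO i) : S = NS.pE i := by
  cases S <;> simp [step] at h
  case pE i' => rw [h]

lemma step0_aS {S : NS} {i : ℕ} (h : step S 0 = NS.aS i) :
    S = NS.pE i ∨ S = NS.aS i := by
  cases S <;> simp [step] at h
  case pE i' => left; rw [h]
  case aS i' => right; rw [h]

lemma step1_aS {S : NS} {i : ℕ} (h : step S 1 = NS.aS i) : False := by
  cases S <;> simp [step] at h

lemma step0_bS {S : NS} {i : ℕ} (h : step S 0 = NS.bS i) : S = NS.bS i := by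
  cases S <;> simp [step] at h
  case bS i' => rw [h]

lemma step1_bS {S : NS} {i : ℕ} (h : step S 1 = NS.bS i) : S = NS.pO i := by
  cases S <;> simp [step] at h
  case pO i' => rw [h]

lemma state_spec (x : ℕ) (hx : 1 ≤ x) :
    (∀ i, state x = NS.pE i → x = pth (2*i)) ∧
    (∀ i, state x = NS.pO i → x = pth (2*i+1)) ∧
    (∀ i, state x = NS.aS i → ∃ s, x = 2^(s+1) * pth (2*i)) ∧
    (∀ i, state x = NS.bS i → ∃ s, x = 2^s * (2 * pth (2*i+1) + 1)) := by
  induction x using Nat.strong_induction_on with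
  | _ x IH =>
  rcases eq_or_lt_of_le hx with h1 | h2
  · obtain rfl : x = 1 := h1.symm
    refine ⟨fun i h => ?_, fun i h => ?_, fun i h => ?_, fun i h => ?_⟩ <;>
      rw [state_one] at h <;> cases h
    rfl
  · have hy1 : 1 ≤ x / 2 := by omega
    have hy2 : x / 2 < x := by omega
    obtain ⟨IH1, IH2, IH3, IH4⟩ := IH (x/2) hy2 hy1
    have hsplit : x = 2 * (x/2) ∨ x = 2 * (x/2) + 1 := by omega
    have hst0 : x = 2 * (x/2) → state x = step (state (x/2)) 0 := by
      intro hh; conv_lhs => rw [hh]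
      exact state_double _ hy1
    have hst1 : x = 2 * (x/2) + 1 → state x = step (state (x/2)) 1 := by
      intro hh; conv_lhs => rw [hh]
      exact state_double' _ hy1
    refine ⟨fun i h => ?_, fun i h => ?_, fun i h => ?_, fun i h => ?_⟩
    · rcases hsplit with hx2 | hx2
      · rw [hst0 hx2] at h
        obtain ⟨i', rfl, hS⟩ := step0_pE h
        rw [hx2, show 2*(i'+1) = 2*i'+2 from by ring, pth_double', IH2 i' hS]
      · rw [hst1 hx2] at h
        exact absurd h (by intro hh; exact step1_pE hh)
    · rcases hsplit with hx2 | hx2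
      · rw [hst0 hx2] at h
        exact absurd h (by intro hh; exact step0_pO hh)
      · rw [hst1 hx2] at h
        have hS := step1_pO h
        rw [hx2, pth_double, IH1 i hS]
    · rcases hsplit with hx2 | hx2
      · rw [hst0 hx2] at h
        rcases step0_aS h with hS | hS
        · exact ⟨0, by rw [hx2, IH1 i hS]; ring⟩
        · obtain ⟨s, hsx⟩ := IH3 i hS
          exact ⟨s+1, by rw [hx2, hsx]; ring⟩
      · rw [hst1 hx2] at h
        exact absurd h (by intro hh; exact step1_aS hh)
    · rcases hsplit with hx2 | hx2
      · rw [hst0 hx2] at h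
        have hS := step0_bS h
        obtain ⟨s, hsx⟩ := IH4 i hS
        exact ⟨s+1, by rw [hx2, hsx]; ring⟩
      · rw [hst1 hx2] at h
        have hS := step1_bS h
        exact ⟨0, by rw [hx2, IH2 i hS]; ring⟩

variable {m : ℕ}

def av {t : ℕ} (a : Fin t → ZMod m) (i : ℕ) : ZMod m :=
  if h : i < t then a ⟨i, h⟩ else 0

@[simp] lemma av_zero (t i : ℕ) : av (0 : Fin t → ZMod m) i = 0 := by
  unfold av; split <;> simp

def val (t : ℕ) (a b : Fin t → ZMod m) (x : ℕ) : ZMod m :=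
  match state x with
  | .aS i => av a i
  | .pO i => - av b i
  | .bS i => - av b i
  | _ => 0

lemma val_def (t : ℕ) (a b : Fin t → ZMod m) (x : ℕ) :
    val t a b x = (match state x with
      | NS.aS i => av a i
      | NS.pO i => - av b i
      | NS.bS i => - av b i
      | _ => 0) := rfl

lemma legal_iff {d : ℕ} (a b : Fin ((d+1)/2) → ZMod m) :
    isLegal (fun v : Vtx d => val ((d+1)/2) a b v.1) ↔ a = b := by
  constructor
  · intro h
    funext i
    have h2i : 2 * i.1 + 1 ≤ d := by have := i.2; omega
    have hx : pth (2*i.1) < 2 ^ d :=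
      lt_of_lt_of_le (pth_lt _) (Nat.pow_le_pow_right (by norm_num) h2i)
    have heq : val ((d+1)/2) a b (pth (2*i.1))
        = val ((d+1)/2) a b (2 * pth (2*i.1)) + val ((d+1)/2) a b (2 * pth (2*i.1) + 1) :=
      h (pth (2*i.1)) (pth_pos _) hx
    have hsE : state (pth (2*i.1)) = NS.pE i.1 := by
      rw [state_pth]; simp [Nat.mul_div_cancel_left, Nat.mul_mod_right]
    have hsA : state (2 * pth (2*i.1)) = NS.aS i.1 := by
      rw [state_double _ (pth_pos _), hsE]; simp [step]
    have hsO : state (2 * pth (2*i.1) + 1) = NS.pO i.1 := by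
      rw [state_double' _ (pth_pos _), hsE]; simp [step]
    rw [val_def, val_def, val_def, hsE, hsA, hsO] at heq
    simp only at heq
    have : av a i.1 = av b i.1 := by
      have := heq.symm
      rwa [add_neg_eq_zero] at this
    unfold av at this
    rw [dif_pos i.2, dif_pos i.2] at this
    simpa using this
  · rintro rfl
    intro x h1 h2
    show val _ a a x = val _ a a (2*x) + val _ a a (2*x+1)
    have hA := state_double x h1
    have hB := state_double' x h1
    rcases hs : state x with _ | i | i | i | i <;>
      rw [hs] at hA hB <;>
      rw [val_def, val_def, val_def, hA, hB, hs] <;> simp [step]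

lemma log2_eq {x ℓ : ℕ} (h1 : 2^ℓ ≤ x) (h2 : x < 2^(ℓ+1)) : Nat.log2 x = ℓ := by
  rw [Nat.log2_eq_log_two]
  exact Nat.log_eq_of_pow_le_of_lt_pow h1 h2

lemma inorderPos_eq (d : ℕ) {ℓ x : ℕ} (h1 : 2^ℓ ≤ x) (h2 : x < 2^(ℓ+1)) :
    inorderPos d x = (2*(x - 2^ℓ) + 1) * 2^(d-ℓ) := by
  unfold inorderPos
  rw [log2_eq h1 h2, pow_succ 2 (d-ℓ)]
  ring

lemma inorderPos_pos (d x : ℕ) : 1 ≤ inorderPos d x :=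
  le_trans Nat.one_le_two_pow (Nat.le_add_left _ _)

lemma pow_le_pow_iff_le {a b : ℕ} (h : 2^a ≤ 2^b) : a ≤ b :=
  (Nat.pow_le_pow_iff_right (by norm_num)).1 h

lemma lt_pow_le {a b : ℕ} (h : 2^a < 2^(b+1)) : a ≤ b := by
  have := (Nat.pow_lt_pow_iff_right (a := 2) (by norm_num)).1 h
  omega

lemma inorderPos_le (d x : ℕ) (hx1 : 1 ≤ x) (hx2 : x < 2^(d+1)) :
    inorderPos d x ≤ 2^(d+1) - 1 := by
  have ha : 2 ^ Nat.log2 x ≤ x := Nat.log2_self_le (by omega)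
  have hb : x < 2 ^ (Nat.log2 x + 1) := Nat.lt_log2_self
  set ℓ := Nat.log2 x with hℓ
  have hc : ℓ ≤ d := lt_pow_le (lt_of_le_of_lt ha hx2)
  rw [inorderPos_eq d ha hb]
  have e1 : (2:ℕ)^(ℓ+1) * 2^(d-ℓ) = 2^(d+1) := by
    rw [← pow_add]; congr 1; omega
  have e2 : (1:ℕ) ≤ 2^(d-ℓ) := Nat.one_le_two_pow
  have e3 : 2*(x - 2^ℓ) + 1 ≤ 2^(ℓ+1) - 1 := by
    have : (2:ℕ)^(ℓ+1) = 2 * 2^ℓ := by ring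
    omega
  calc (2*(x - 2^ℓ) + 1) * 2^(d-ℓ) ≤ (2^(ℓ+1) - 1) * 2^(d-ℓ) :=
        Nat.mul_le_mul_right _ e3
    _ = 2^(ℓ+1) * 2^(d-ℓ) - 2^(d-ℓ) := by rw [Nat.sub_mul, one_mul]
    _ ≤ 2^(d+1) - 1 := by rw [e1]; omega

def invPos (d p : ℕ) : ℕ :=
  2 ^ (d - padicValNat 2 p) + p / 2 ^ (padicValNat 2 p + 1)

lemma padic_odd_mul (q v : ℕ) : padicValNat 2 ((2*q+1) * 2^v) = v := by
  have h1 : (2*q+1) ≠ 0 := by omega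
  have h2 : (2:ℕ)^v ≠ 0 := by positivity
  rw [padicValNat.mul h1 h2, padicValNat.eq_zero_of_not_dvd (by omega), padicValNat.prime_pow]
  omega

lemma invPos_inorderPos (d x : ℕ) (hx1 : 1 ≤ x) (hx2 : x < 2^(d+1)) :
    invPos d (inorderPos d x) = x := by
  have ha : 2 ^ Nat.log2 x ≤ x := Nat.log2_self_le (by omega)
  have hb : x < 2 ^ (Nat.log2 x + 1) := Nat.lt_log2_self
  set ℓ := Nat.log2 x with hℓ
  have hc : ℓ ≤ d := lt_pow_le (lt_of_le_of_lt ha hx2)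
  rw [inorderPos_eq d ha hb]
  unfold invPos
  rw [padic_odd_mul (x - 2^ℓ) (d-ℓ)]
  have e1 : d - (d - ℓ) = ℓ := by omega
  have e2 : (2*(x - 2^ℓ) + 1) * 2^(d-ℓ) / 2^(d-ℓ+1) = x - 2^ℓ := by
    rw [pow_succ, ← Nat.div_div_eq_div_mul, Nat.mul_div_cancel _ (by positivity)]
    omega
  rw [e1, e2]
  omega

lemma pos_aS (d i s : ℕ) (hx : 2^(s+1) * pth (2*i) < 2^(d+1)) :
    inorderPos d (2^(s+1) * pth (2*i)) ≤ altNum d := by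
  have hP1 : 2^(2*i) ≤ pth (2*i) := pth_ge _
  have hP2 : pth (2*i) < 2^(2*i+1) := pth_lt _
  have h3P : 3 * pth (2*i) + 2 = 5 * 2^(2*i) := by
    have h := three_pth (2*i); omega
  have hL : (2:ℕ)^(2*i+s+1) = 2^(s+1) * 2^(2*i) := by rw [← pow_add]; congr 1; omega
  have hxl : 2^(2*i+s+1) ≤ 2^(s+1) * pth (2*i) := by
    rw [hL]; exact Nat.mul_le_mul_left _ hP1
  have hxu : 2^(s+1) * pth (2*i) < 2^((2*i+s+1)+1) := by
    have h2 : (2:ℕ)^((2*i+s+1)+1) = 2^(s+1) * 2^(2*i+1) := by rw [← pow_add]; congr 1; omega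
    rw [h2]
    exact mul_lt_mul_of_pos_left hP2 (by positivity)
  have hld : 2*i+s+1 ≤ d := lt_pow_le (lt_of_le_of_lt hxl hx)
  have hk := three_altNum d
  rw [inorderPos_eq d hxl hxu]
  have hE1 : (1:ℕ) ≤ 2^(d-(2*i+s+1)) := Nat.one_le_two_pow
  suffices h : 3 * ((2*(2^(s+1) * pth (2*i) - 2^(2*i+s+1)) + 1) * 2^(d-(2*i+s+1))) + 2
      ≤ 2^(d+2) by omega
  have h3P' : (3:ℤ) * (pth (2*i) : ℤ) + 2 = 5 * 2^(2*i) := by exact_mod_cast h3P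
  zify [hxl]
  have hsub : (3:ℤ) * (2^(s+1) * (pth (2*i) : ℤ) - 2^(2*i+s+1))
      = 2^(s+2) * 2^(2*i) - 2^(s+2) := by
    linear_combination (2:ℤ)^(s+1) * h3P'
  have hpow' : ((2:ℤ))^(d+2) = 2 * 2^(s+2) * 2^(2*i) * 2^(d-(2*i+s+1)) := by
    have h2 : (2:ℕ)^(d+2) = 2^(s+3) * 2^(2*i) * 2^(d-(2*i+s+1)) := by
      rw [← pow_add, ← pow_add]; congr 1; omega
    have h3 : ((2:ℤ))^(d+2) = 2^(s+3) * 2^(2*i) * 2^(d-(2*i+s+1)) := by exact_mod_cast h2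
    rw [h3]; ring
  have hE1' : (1:ℤ) ≤ 2^(d-(2*i+s+1)) := by exact_mod_cast hE1
  have hA2 : (4:ℤ) ≤ 2^(s+2) := by
    calc (4:ℤ) = 2^2 := by norm_num
    _ ≤ 2^(s+2) := by apply pow_le_pow_right₀ (by norm_num); omega
  have hAE : 8 * ((2:ℤ))^(d-(2*i+s+1)) ≤ 2 * 2^(s+2) * 2^(d-(2*i+s+1)) := by
    nlinarith
  have key := congrArg (fun z : ℤ => z * 2^(d-(2*i+s+1))) hsub
  nlinarith [key, hpow', hE1', hAE]

lemma pos_pO (d i : ℕ) (hx : pth (2*i+1) < 2^(d+1)) :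
    altNum d < inorderPos d (pth (2*i+1)) := by
  have hP1 : 2^(2*i+1) ≤ pth (2*i+1) := pth_ge _
  have hP2 : pth (2*i+1) < 2^((2*i+1)+1) := pth_lt _
  have h3P : 3 * pth (2*i+1) + 1 = 5 * 2^(2*i+1) := by
    have h := three_pth (2*i+1); omega
  have hld : 2*i+1 ≤ d := lt_pow_le (lt_of_le_of_lt hP1 hx)
  have hk := three_altNum d
  rw [inorderPos_eq d hP1 hP2]
  have hE1 : (1:ℕ) ≤ 2^(d-(2*i+1)) := Nat.one_le_two_pow
  suffices h : 2^(d+2) < 3 * ((2*(pth (2*i+1) - 2^(2*i+1)) + 1) * 2^(d-(2*i+1))) by omega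
  have h3P' : (3:ℤ) * (pth (2*i+1) : ℤ) + 1 = 5 * 2^(2*i+1) := by exact_mod_cast h3P
  zify [hP1]
  have hpow' : ((2:ℤ))^(d+2) = 2^(2*i+3) * 2^(d-(2*i+1)) := by
    have h2 : (2:ℕ)^(d+2) = 2^(2*i+3) * 2^(d-(2*i+1)) := by
      rw [← pow_add]; congr 1; omega
    exact_mod_cast h2
  have hE1' : (1:ℤ) ≤ 2^(d-(2*i+1)) := by exact_mod_cast hE1
  have hsub : (3:ℤ) * ((pth (2*i+1) : ℤ) - 2^(2*i+1)) = 2^(2*i+2) - 1 := by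
    linear_combination h3P'
  have key := congrArg (fun z : ℤ => z * 2^(d-(2*i+1))) hsub
  have eq1 : 3 * ((2*((pth (2*i+1) : ℤ) - 2^(2*i+1)) + 1) * 2^(d-(2*i+1)))
      = 2^(d+2) + 2^(d-(2*i+1)) := by
    linear_combination 2*key - hpow'
  linarith [eq1, hE1']

lemma pos_bS (d i s : ℕ) (hx : 2^s * (2 * pth (2*i+1) + 1) < 2^(d+1)) :
    altNum d < inorderPos d (2^s * (2 * pth (2*i+1) + 1)) := by
  have hP1 : 2^(2*i+1) ≤ pth (2*i+1) := pth_ge _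
  have hP2 : pth (2*i+1) < 2^((2*i+1)+1) := pth_lt _
  have h3P : 3 * pth (2*i+1) + 1 = 5 * 2^(2*i+1) := by
    have h := three_pth (2*i+1); omega
  have hL : (2:ℕ)^(2*i+2+s) = 2^s * 2^(2*i+2) := by rw [← pow_add]; congr 1; omega
  have hxl : 2^(2*i+2+s) ≤ 2^s * (2 * pth (2*i+1) + 1) := by
    rw [hL]
    apply Nat.mul_le_mul_left
    have h2 : (2:ℕ)^(2*i+2) = 2 * 2^(2*i+1) := by ring
    omega
  have hxu : 2^s * (2 * pth (2*i+1) + 1) < 2^((2*i+2+s)+1) := by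
    have h2 : (2:ℕ)^((2*i+2+s)+1) = 2^s * 2^(2*i+3) := by rw [← pow_add]; congr 1; omega
    rw [h2]
    have h4 : 2 * pth (2*i+1) + 1 < 2^(2*i+3) := by
      have h5 : (2:ℕ)^(2*i+3) = 4 * 2^(2*i+1) := by ring
      omega
    exact mul_lt_mul_of_pos_left h4 (pow_pos (by norm_num) s)
  have hld : 2*i+2+s ≤ d := lt_pow_le (lt_of_le_of_lt hxl hx)
  have hk := three_altNum d
  rw [inorderPos_eq d hxl hxu]
  have hE1 : (1:ℕ) ≤ 2^(d-(2*i+2+s)) := Nat.one_le_two_pow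
  suffices h : 2^(d+2)
      < 3 * ((2*(2^s * (2 * pth (2*i+1) + 1) - 2^(2*i+2+s)) + 1) * 2^(d-(2*i+2+s))) by omega
  have h3P' : (3:ℤ) * (pth (2*i+1) : ℤ) + 1 = 5 * 2^(2*i+1) := by exact_mod_cast h3P
  zify [hxl]
  have hpow' : ((2:ℤ))^(d+2) = 2^(2*i+s+4) * 2^(d-(2*i+2+s)) := by
    have h2 : (2:ℕ)^(d+2) = 2^(2*i+s+4) * 2^(d-(2*i+2+s)) := by
      rw [← pow_add]; congr 1; omega
    exact_mod_cast h2
  have hE1' : (1:ℤ) ≤ 2^(d-(2*i+2+s)) := by exact_mod_cast hE1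
  have hsub : (3:ℤ) * (2^s * (2 * (pth (2*i+1) : ℤ) + 1) - 2^(2*i+2+s))
      = 2^s * 2^(2*i+3) + 2^s := by
    linear_combination (2:ℤ)^s * 2 * h3P'
  have key := congrArg (fun z : ℤ => z * 2^(d-(2*i+2+s))) hsub
  have eq1 : 3 * ((2*(2^s * (2 * (pth (2*i+1) : ℤ) + 1) - 2^(2*i+2+s)) + 1) * 2^(d-(2*i+2+s)))
      = 2^(d+2) + 2^(s+1) * 2^(d-(2*i+2+s)) + 3 * 2^(d-(2*i+2+s)) := by
    linear_combination 2*key - hpow'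
  have hnn : (0:ℤ) ≤ 2^(s+1) * 2^(d-(2*i+2+s)) := by positivity
  linarith [eq1, hE1', hnn]

lemma pos_sub_lt {d x : ℕ} (h1 : 1 ≤ x) (h2 : x < 2^(d+1)) :
    inorderPos d x - 1 < 2^(d+1) - 1 := by
  have ha := inorderPos_pos d x
  have hb := inorderPos_le d x h1 h2
  have hc : (1:ℕ) < 2^(d+1) := Nat.one_lt_two_pow (by omega)
  omega

def gamU {m d : ℕ} (u : Fin (2^(d+1)-1) → ZMod m) : Vtx d → ZMod m :=
  fun x => u ⟨inorderPos d x.1 - 1, pos_sub_lt x.2.1 x.2.2⟩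

lemma consistent_iff {d m : ℕ} (γ : Vtx d → ZMod m) (u : Fin (2^(d+1)-1) → ZMod m) :
    consistent γ u ↔ γ = gamU u := by
  constructor
  · intro h; funext x; exact (h x (pos_sub_lt x.2.1 x.2.2)).symm
  · rintro rfl x h; rfl

lemma Pfull_eq_one (F : Type*) [Field F] {m d : ℕ} (u : Fin (2^(d+1)-1) → ZMod m)
    (h : isLegal (gamU u)) : Pfull F m d u = 1 := by
  unfold Pfull
  haveI hu : Unique {γ : Vtx d → ZMod m // isLegal γ ∧ consistent γ u} :=
    { default := ⟨gamU u, h, (consistent_iff _ _).2 rfl⟩,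
      uniq := fun γ => Subtype.ext ((consistent_iff _ _).1 γ.2.2) }
  rw [Nat.card_unique]
  norm_num

lemma Pfull_eq_zero (F : Type*) [Field F] {m d : ℕ} (u : Fin (2^(d+1)-1) → ZMod m)
    (h : ¬ isLegal (gamU u)) : Pfull F m d u = 0 := by
  unfold Pfull
  haveI : IsEmpty {γ : Vtx d → ZMod m // isLegal γ ∧ consistent γ u} :=
    ⟨fun γ => h (((consistent_iff _ _).1 γ.2.2) ▸ γ.2.1)⟩
  rw [Nat.card_of_isEmpty]
  norm_num

lemma val_left {d : ℕ} (a b : Fin ((d+1)/2) → ZMod m) {x : ℕ} (hx1 : 1 ≤ x)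
    (hx2 : x < 2^(d+1)) (hk : inorderPos d x ≤ altNum d) :
    val ((d+1)/2) a b x = val ((d+1)/2) a 0 x := by
  rw [val_def, val_def]
  rcases hs : state x with _ | i | i | i | i
  · rfl
  · rfl
  · exfalso
    have hx := (state_spec x hx1).2.1 i hs
    subst hx
    exact absurd (pos_pO d i hx2) (by omega)
  · rfl
  · exfalso
    obtain ⟨s, hx⟩ := (state_spec x hx1).2.2.2 i hs
    subst hx
    exact absurd (pos_bS d i s hx2) (by omega)

lemma val_right {d : ℕ} (a b : Fin ((d+1)/2) → ZMod m) {x : ℕ} (hx1 : 1 ≤ x)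
    (hx2 : x < 2^(d+1)) (hk : altNum d < inorderPos d x) :
    val ((d+1)/2) a b x = val ((d+1)/2) 0 b x := by
  rw [val_def, val_def]
  rcases hs : state x with _ | i | i | i | i
  · rfl
  · rfl
  · rfl
  · exfalso
    obtain ⟨s, hx⟩ := (state_spec x hx1).2.2.1 i hs
    subst hx
    exact absurd (pos_aS d i s hx2) (by omega)
  · rfl

def rowW (m d : ℕ) (a : Fin ((d+1)/2) → ZMod m) : Fin (altNum d) → ZMod m :=
  fun i => val ((d+1)/2) a 0 (invPos d (i.1+1))

def colW (m d l : ℕ) (b : Fin ((d+1)/2) → ZMod m) : Fin l → ZMod m :=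
  fun j => val ((d+1)/2) 0 b (invPos d (altNum d + j.1 + 1))

lemma entry (F : Type*) [Field F] (m d l : ℕ) (hl : 2^(d+1)-1 = altNum d + l)
    (a b : Fin ((d+1)/2) → ZMod m) :
    MkPd F m d l hl (rowW m d a) (colW m d l b) = if a = b then (1:F) else 0 := by
  set U : Fin (2^(d+1)-1) → ZMod m :=
    fun i => Fin.append (rowW m d a) (colW m d l b) (Fin.cast hl i) with hU
  have hMk : MkPd F m d l hl (rowW m d a) (colW m d l b) = Pfull F m d U := rfl
  have hgam : gamU U = fun v : Vtx d => val ((d+1)/2) a b v.1 := by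
    funext x
    have hx1 : 1 ≤ x.1 := x.2.1
    have hx2 : x.1 < 2^(d+1) := x.2.2
    show U ⟨inorderPos d x.1 - 1, pos_sub_lt hx1 hx2⟩ = val ((d+1)/2) a b x.1
    have hpos := inorderPos_pos d x.1
    have hle := inorderPos_le d x.1 hx1 hx2
    by_cases hk : inorderPos d x.1 ≤ altNum d
    · have hlt : inorderPos d x.1 - 1 < altNum d := by omega
      have hcast : Fin.cast hl ⟨inorderPos d x.1 - 1, pos_sub_lt hx1 hx2⟩
          = Fin.castAdd l ⟨inorderPos d x.1 - 1, hlt⟩ := by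
        apply Fin.ext; simp
      show Fin.append (rowW m d a) (colW m d l b)
        (Fin.cast hl ⟨inorderPos d x.1 - 1, pos_sub_lt hx1 hx2⟩) = _
      rw [hcast, Fin.append_left]
      show val ((d+1)/2) a 0 (invPos d ((inorderPos d x.1 - 1) + 1)) = _
      rw [show (inorderPos d x.1 - 1) + 1 = inorderPos d x.1 from by omega,
        invPos_inorderPos d x.1 hx1 hx2]
      exact (val_left a b hx1 hx2 hk).symm
    · have hlt : inorderPos d x.1 - 1 - altNum d < l := by omega
      have hcast : Fin.cast hl ⟨inorderPos d x.1 - 1, pos_sub_lt hx1 hx2⟩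
          = Fin.natAdd (altNum d) ⟨inorderPos d x.1 - 1 - altNum d, hlt⟩ := by
        apply Fin.ext; simp; omega
      show Fin.append (rowW m d a) (colW m d l b)
        (Fin.cast hl ⟨inorderPos d x.1 - 1, pos_sub_lt hx1 hx2⟩) = _
      rw [hcast, Fin.append_right]
      show val ((d+1)/2) 0 b (invPos d (altNum d + (inorderPos d x.1 - 1 - altNum d) + 1)) = _
      rw [show altNum d + (inorderPos d x.1 - 1 - altNum d) + 1 = inorderPos d x.1 from by omega,
        invPos_inorderPos d x.1 hx1 hx2]
      exact (val_right a b hx1 hx2 (by omega)).symm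
  by_cases hab : a = b
  · rw [if_pos hab, hMk]
    exact Pfull_eq_one F U (by rw [hgam]; exact (legal_iff a b).2 hab)
  · rw [if_neg hab, hMk]
    refine Pfull_eq_zero F U (fun hleg => hab ?_)
    rw [hgam] at hleg
    exact (legal_iff a b).1 hleg

lemma rank_le_of_submatrix {F : Type*} [Field F] {R C : Type*} [Fintype R] [Fintype C]
    [DecidableEq R] [DecidableEq C] {r : ℕ} (A : Matrix R C F) (ρ : Fin r → R)
    (c : Fin r → C) : (A.submatrix ρ c).rank ≤ A.rank := by
  have h1 : A.submatrix ρ c =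
      (Matrix.of fun i x => if ρ i = x then (1:F) else 0) * A *
      (Matrix.of fun y j => if y = c j then (1:F) else 0) := by
    ext i j
    simp [Matrix.mul_apply, Matrix.submatrix_apply, ite_mul, mul_ite,
      Finset.sum_ite_eq, Finset.sum_ite_eq']
  rw [h1]
  exact le_trans (Matrix.rank_mul_le_left _ _) (Matrix.rank_mul_le_right _ _)

end PdAux
/-- for `k` with binary expansion `1010⋯`, the matrix `M_k(P_d)` contains
an `r × r` identity submatrix with `r ≥ m^{d/32}`, and hence has rank at least
`m^{d/32}`. -/
theorem Pd_partial_matrix_rank (F : Type*) [Field F] (m d : ℕ) [NeZero m]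
    (hm : 1 ≤ m) (hd : 1 ≤ d) (l : ℕ) (hl : 2 ^ (d + 1) - 1 = altNum d + l) :
    ∃ r : ℕ,
      (m : ℝ) ^ ((d : ℝ) / 32) ≤ (r : ℝ) ∧
      (∃ (ρ : Fin r → (Fin (altNum d) → ZMod m)) (c : Fin r → (Fin l → ZMod m)),
        Function.Injective ρ ∧ Function.Injective c ∧
        ∀ i j : Fin r, MkPd F m d l hl (ρ i) (c j) = if i = j then (1 : F) else 0) ∧
      r ≤ (MkPd F m d l hl).rank ∧
      (m : ℝ) ^ ((d : ℝ) / 32) ≤ ((MkPd F m d l hl).rank : ℝ) := by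
  classical
  have hcard : Fintype.card (Fin ((d+1)/2) → ZMod m) = m ^ ((d+1)/2) := by
    rw [Fintype.card_fun]
    simp [ZMod.card]
  let e : Fin (m^((d+1)/2)) ≃ (Fin ((d+1)/2) → ZMod m) :=
    (Fintype.equivFinOfCardEq hcard).symm
  have hδ : ∀ i j : Fin (m^((d+1)/2)),
      MkPd F m d l hl (PdAux.rowW m d (e i)) (PdAux.colW m d l (e j))
        = if i = j then (1:F) else 0 := by
    intro i j
    rw [PdAux.entry F m d l hl (e i) (e j)]
    by_cases h : i = j
    · subst h; rw [if_pos rfl, if_pos rfl]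
    · rw [if_neg h, if_neg (fun hc => h (e.injective hc))]
  have hinjρ : Function.Injective (fun i => PdAux.rowW m d (e i)) := by
    intro i j hij
    by_contra hne
    have h1 := hδ i j
    have h2 := hδ j j
    simp only at hij
    rw [hij, if_neg hne] at h1
    rw [if_pos rfl] at h2
    rw [h1] at h2
    exact one_ne_zero h2.symm
  have hinjc : Function.Injective (fun j => PdAux.colW m d l (e j)) := by
    intro i j hij
    by_contra hne
    have h1 := hδ i j
    have h2 := hδ i i
    simp only at hij
    rw [hij] at h2
    rw [if_neg hne] at h1
    rw [if_pos rfl] at h2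
    rw [h1] at h2
    exact one_ne_zero h2.symm
  have hsub : (MkPd F m d l hl).submatrix
      (fun i => PdAux.rowW m d (e i)) (fun j => PdAux.colW m d l (e j))
        = (1 : Matrix (Fin (m^((d+1)/2))) (Fin (m^((d+1)/2))) F) := by
    ext i j
    rw [Matrix.submatrix_apply, hδ, Matrix.one_apply]
  have hrank : m^((d+1)/2) ≤ (MkPd F m d l hl).rank := by
    have h1 := PdAux.rank_le_of_submatrix (MkPd F m d l hl)
      (fun i => PdAux.rowW m d (e i)) (fun j => PdAux.colW m d l (e j))
    rw [hsub, Matrix.rank_one, Fintype.card_fin] at h1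
    exact h1
  have hm1 : (1:ℝ) ≤ (m:ℝ) := by exact_mod_cast hm
  have ht : (d:ℝ)/32 ≤ (((d+1)/2 : ℕ) : ℝ) := by
    have h2 : d ≤ 2*((d+1)/2) := by omega
    have h3 : (d:ℝ) ≤ 2*(((d+1)/2 : ℕ) : ℝ) := by exact_mod_cast h2
    linarith
  have hrpow : (m:ℝ) ^ ((d:ℝ)/32) ≤ ((m^((d+1)/2) : ℕ) : ℝ) := by
    have hcalc : (m:ℝ) ^ ((d:ℝ)/32) ≤ (m:ℝ) ^ ((((d+1)/2 : ℕ)):ℝ) :=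
      Real.rpow_le_rpow_of_exponent_le hm1 ht
    rw [Real.rpow_natCast] at hcalc
    calc (m:ℝ) ^ ((d:ℝ)/32) ≤ (m:ℝ) ^ (((d+1)/2 : ℕ)) := hcalc
    _ = ((m^((d+1)/2) : ℕ) : ℝ) := by push_cast; ring
  refine ⟨m^((d+1)/2), hrpow,
    ⟨fun i => PdAux.rowW m d (e i), fun j => PdAux.colW m d l (e j), hinjρ, hinjc, hδ⟩,
    hrank, le_trans hrpow ?_⟩
  exact_mod_cast hrank
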